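/- Let μ be a probability measure on ℝ concentrated on [0,∞) with ∫ x dμ(x) = 1 and ∫ x² dμ(x) < ∞, such that μ equals the pushforward of (uniform on [0,1]) ⊗ (uniform on [0,1]) ⊗ μ ⊗ μ under the map (u, v, x, y) ↦ u^{β/2}·v^β·x + u^{β/2}·(1−v)^β·y. Then its second moment is given explicitly by ∫ x² dμ(x) = 2·B(β+1, β+1)·(2β+1)/(3(1−β)). -/

import Mathlib

open MeasureTheory Real Set

/-- The exponent `β = (√17 - 3)/2`, the positive root of `(β+1)(β+2) = 4`. -/
noncomputable def β : ℝ := (Real.sqrt 17 - 3) / 2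

/-- The Beta function `B(a,b) = ∫₀¹ t^{a-1}(1-t)^{b-1} dt`. -/
noncomputable def Bfun (a b : ℝ) : ℝ := ∫ t in (0:ℝ)..1, t ^ (a - 1) * (1 - t) ^ (b - 1)

/-- The uniform distribution on `[0,1]`. -/
noncomputable def unif : MeasureTheory.Measure ℝ :=
  MeasureTheory.volume.restrict (Set.Icc (0 : ℝ) 1)

/-!
Write the fixed-point equation as `Ψ = A Ψ' + B Ψ''` with weights `A = U^{β/2} V^β`,
`B = U^{β/2} (1-V)^β` independent of the i.i.d. copies `Ψ', Ψ''`. Taking second moments gives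
`m₂ = (E A² + E B²) m₂ + 2 E[AB] (E Ψ)²`, where `E A² = E B² = 1/((β+1)(2β+1))` and
`E[AB] = B(β+1,β+1)/(β+1)`. Since `(β+1)(2β+1) - 2 = 3(1-β)` by `(β+1)(β+2) = 4`,
this linear equation in `m₂` has the stated solution.
-/

lemma β_add_one_mul_β_add_two : (β + 1) * (β + 2) = 4 := by
  have := Real.sq_sqrt (show (0 : ℝ) ≤ 17 by norm_num)
  unfold β
  nlinarith

lemma β_pos : 0 < β := by
  have : 3 < √17 := (Real.lt_sqrt (by norm_num)).2 (by norm_num)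
  unfold β
  linarith

lemma β_lt_one : β < 1 := by
  nlinarith [β_add_one_mul_β_add_two, β_pos]

instance : IsProbabilityMeasure unif :=
  ⟨by simp [unif]⟩

lemma integral_unif (f : ℝ → ℝ) : ∫ x, f x ∂unif = ∫ x in (0 : ℝ)..1, f x := by
  rw [intervalIntegral.integral_of_le zero_le_one, unif, integral_Icc_eq_integral_Ioc]

lemma integrable_unif_prod_unif_of_continuous {f : ℝ × ℝ → ℝ} (hf : Continuous f) :
    Integrable f (unif.prod unif) := by
  rw [unif, Measure.prod_restrict, ← Measure.volume_eq_prod]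
  exact hf.continuousOn.integrableOn_compact (isCompact_Icc.prod isCompact_Icc)

lemma integral_unif_rpow_sq {c : ℝ} (hc : 0 ≤ c) :
    ∫ x, (x ^ c) ^ 2 ∂unif = 1 / (2 * c + 1) := by
  have hsq : ∀ x ∈ uIcc (0 : ℝ) 1, (x ^ c) ^ 2 = x ^ (2 * c) := fun x hx => by
    rw [uIcc_of_le zero_le_one] at hx
    rw [← Real.rpow_natCast, ← Real.rpow_mul hx.1, mul_comm]
    norm_num
  rw [integral_unif, intervalIntegral.integral_congr hsq,
    integral_rpow (Or.inl (by linarith)), Real.one_rpow, Real.zero_rpow (by positivity)]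
  ring

lemma integral_unif_one_sub_rpow_sq {c : ℝ} (hc : 0 ≤ c) :
    ∫ x, ((1 - x) ^ c) ^ 2 ∂unif = 1 / (2 * c + 1) := by
  rw [← integral_unif_rpow_sq hc, integral_unif, integral_unif,
    intervalIntegral.integral_comp_sub_left (fun x => (x ^ c) ^ 2)]
  norm_num

lemma integral_unif_rpow_mul_one_sub_rpow (a b : ℝ) :
    ∫ x, x ^ a * (1 - x) ^ b ∂unif = Bfun (a + 1) (b + 1) := by
  simp [integral_unif, Bfun]

section Weights

variable {c d : ℝ}

lemma integral_unif_prod_unif_rpow_mul_rpow_sq (hc : 0 ≤ c) (hd : 0 ≤ d) :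
    ∫ w, (w.1 ^ c * w.2 ^ d) ^ 2 ∂unif.prod unif = 1 / (2 * c + 1) * (1 / (2 * d + 1)) := by
  simp only [mul_pow]
  rw [integral_prod_mul (fun u => (u ^ c) ^ 2) (fun v => (v ^ d) ^ 2),
    integral_unif_rpow_sq hc, integral_unif_rpow_sq hd]

lemma integral_unif_prod_unif_rpow_mul_one_sub_rpow_sq (hc : 0 ≤ c) (hd : 0 ≤ d) :
    ∫ w, (w.1 ^ c * (1 - w.2) ^ d) ^ 2 ∂unif.prod unif =
      1 / (2 * c + 1) * (1 / (2 * d + 1)) := by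
  simp only [mul_pow]
  rw [integral_prod_mul (fun u => (u ^ c) ^ 2) (fun v => ((1 - v) ^ d) ^ 2),
    integral_unif_rpow_sq hc, integral_unif_one_sub_rpow_sq hd]

lemma integral_unif_prod_unif_rpow_mul_rpow_mul_one_sub_rpow (hc : 0 ≤ c) :
    ∫ w, w.1 ^ c * w.2 ^ d * (w.1 ^ c * (1 - w.2) ^ d) ∂unif.prod unif =
      1 / (2 * c + 1) * Bfun (d + 1) (d + 1) := by
  have hsplit : ∀ w : ℝ × ℝ, w.1 ^ c * w.2 ^ d * (w.1 ^ c * (1 - w.2) ^ d) =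
      (w.1 ^ c) ^ 2 * (w.2 ^ d * (1 - w.2) ^ d) := fun w => by ring
  simp only [hsplit]
  rw [integral_prod_mul (fun u => (u ^ c) ^ 2) (fun v => v ^ d * (1 - v) ^ d),
    integral_unif_rpow_sq hc, integral_unif_rpow_mul_one_sub_rpow]

end Weights

section LinearCombination

variable {α : Type*} [MeasurableSpace α] {ν : Measure α} [SFinite ν]
  {μ : Measure ℝ} [IsProbabilityMeasure μ] {a b : α → ℝ}

lemma integral_linear_comb_sq (ha : Integrable (fun w => a w ^ 2) ν)
    (hb : Integrable (fun w => b w ^ 2) ν) (hab : Integrable (fun w => a w * b w) ν)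
    (h1 : Integrable (fun x : ℝ => x) μ) (h2 : Integrable (fun x : ℝ => x ^ 2) μ) :
    ∫ p : α × ℝ × ℝ, (a p.1 * p.2.1 + b p.1 * p.2.2) ^ 2 ∂ν.prod (μ.prod μ) =
      (∫ w, a w ^ 2 ∂ν + ∫ w, b w ^ 2 ∂ν) * ∫ x, x ^ 2 ∂μ +
        2 * (∫ w, a w * b w ∂ν) * (∫ x, x ∂μ) ^ 2 := by
  have hA := ha.mul_prod (h2.comp_fst μ)
  have hB := hb.mul_prod (h2.comp_snd μ)
  have hC := hab.mul_prod (h1.mul_prod h1)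
  have hAB : Integrable (fun p : α × ℝ × ℝ => a p.1 ^ 2 * p.2.1 ^ 2 + b p.1 ^ 2 * p.2.2 ^ 2)
      (ν.prod (μ.prod μ)) := hA.add hB
  have hexp : ∀ p : α × ℝ × ℝ, (a p.1 * p.2.1 + b p.1 * p.2.2) ^ 2 =
      a p.1 ^ 2 * p.2.1 ^ 2 + b p.1 ^ 2 * p.2.2 ^ 2 + 2 * (a p.1 * b p.1 * (p.2.1 * p.2.2)) :=
    fun p => by ring
  simp only [hexp]
  rw [integral_add hAB (hC.const_mul 2), integral_add hA hB, integral_const_mul,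
    integral_prod_mul (fun w => a w ^ 2) (fun q : ℝ × ℝ => q.1 ^ 2),
    integral_prod_mul (fun w => b w ^ 2) (fun q : ℝ × ℝ => q.2 ^ 2),
    integral_prod_mul (fun w => a w * b w) (fun q : ℝ × ℝ => q.1 * q.2),
    integral_fun_fst (fun x : ℝ => x ^ 2), integral_fun_snd (fun x : ℝ => x ^ 2),
    integral_prod_mul (fun x : ℝ => x) (fun x : ℝ => x)]
  simp only [probReal_univ, one_smul]
  ring

lemma integral_sq_of_eq_map_linear_comb (ha_meas : Measurable a) (hb_meas : Measurable b)
    (ha : Integrable (fun w => a w ^ 2) ν) (hb : Integrable (fun w => b w ^ 2) ν)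
    (hab : Integrable (fun w => a w * b w) ν)
    (h1 : Integrable (fun x : ℝ => x) μ) (h2 : Integrable (fun x : ℝ => x ^ 2) μ)
    (hfix : μ = (ν.prod (μ.prod μ)).map fun p => a p.1 * p.2.1 + b p.1 * p.2.2) :
    ∫ x, x ^ 2 ∂μ = (∫ w, a w ^ 2 ∂ν + ∫ w, b w ^ 2 ∂ν) * ∫ x, x ^ 2 ∂μ +
        2 * (∫ w, a w * b w ∂ν) * (∫ x, x ∂μ) ^ 2 := by
  conv_lhs => rw [hfix]
  rw [integral_map (by fun_prop) (by fun_prop)]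
  exact integral_linear_comb_sq ha hb hab h1 h2

end LinearCombination

theorem psi_second_moment_general (μ : MeasureTheory.Measure ℝ)
    (hprob : MeasureTheory.IsProbabilityMeasure μ)
    (hint1 : MeasureTheory.Integrable (fun x : ℝ => x) μ)
    (hmean : (∫ x, x ∂μ) = 1)
    (hint2 : MeasureTheory.Integrable (fun x : ℝ => x ^ 2) μ)
    (hfix : μ = MeasureTheory.Measure.map
            (fun p : ℝ × ℝ × ℝ × ℝ =>
              p.1 ^ (β / 2) * p.2.1 ^ β * p.2.2.1 +
                p.1 ^ (β / 2) * (1 - p.2.1) ^ β * p.2.2.2)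
            (unif.prod (unif.prod (μ.prod μ)))) :
    (∫ x, x ^ 2 ∂μ) = 2 * Bfun (β + 1) (β + 1) * (2 * β + 1) / (3 * (1 - β)) := by
  have hβ := β_pos
  set a : ℝ × ℝ → ℝ := fun w => w.1 ^ (β / 2) * w.2 ^ β
  set b : ℝ × ℝ → ℝ := fun w => w.1 ^ (β / 2) * (1 - w.2) ^ β
  have ha : Continuous a := by fun_prop (disch := positivity)
  have hb : Continuous b := by fun_prop (disch := positivity)
  have hfix' : μ = ((unif.prod unif).prod (μ.prod μ)).map
      fun p => a p.1 * p.2.1 + b p.1 * p.2.2 := by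
    refine hfix.trans ?_
    rw [← Measure.prodAssoc_prod,
      Measure.map_map (by fun_prop (disch := positivity)) MeasurableEquiv.prodAssoc.measurable]
    rfl
  have key := integral_sq_of_eq_map_linear_comb ha.measurable hb.measurable
    (integrable_unif_prod_unif_of_continuous (by fun_prop))
    (integrable_unif_prod_unif_of_continuous (by fun_prop))
    (integrable_unif_prod_unif_of_continuous (by fun_prop)) hint1 hint2 hfix'
  rw [integral_unif_prod_unif_rpow_mul_rpow_sq (by positivity) hβ.le,
    integral_unif_prod_unif_rpow_mul_one_sub_rpow_sq (by positivity) hβ.le,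
    integral_unif_prod_unif_rpow_mul_rpow_mul_one_sub_rpow (by positivity), hmean] at key
  have h1β : 1 - β ≠ 0 := (sub_pos.2 β_lt_one).ne'
  field_simp at key ⊢
  linear_combination key - 2 * (∫ x, x ^ 2 ∂μ) * β_add_one_mul_β_add_two

/-- Any solution `μ` of the fixed-point equation
`Ψ =d U^{β/2} V^β Ψ + U^{β/2} (1-V)^β Ψ'` that is concentrated on `[0,∞)` with unit
mean and finite second moment has second moment `2 B(β+1,β+1)(2β+1)/(3(1-β))`. -/
theorem psi_second_moment (μ : MeasureTheory.Measure ℝ)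
    (hprob : MeasureTheory.IsProbabilityMeasure μ)
    (hpos : μ {x : ℝ | x < 0} = 0)
    (hint1 : MeasureTheory.Integrable (fun x : ℝ => x) μ)
    (hmean : (∫ x, x ∂μ) = 1)
    (hint2 : MeasureTheory.Integrable (fun x : ℝ => x ^ 2) μ)
    (hfix : μ = MeasureTheory.Measure.map
            (fun p : ℝ × ℝ × ℝ × ℝ =>
              p.1 ^ (β / 2) * p.2.1 ^ β * p.2.2.1 +
                p.1 ^ (β / 2) * (1 - p.2.1) ^ β * p.2.2.2)
            (unif.prod (unif.prod (μ.prod μ)))) :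
    (∫ x, x ^ 2 ∂μ) = 2 * Bfun (β + 1) (β + 1) * (2 * β + 1) / (3 * (1 - β)) :=
  psi_second_moment_general μ hprob hint1 hmean hint2 hfix
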